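/- arXiv:2007.08698 — 2 statements merged into one kernel-verified Lean document; each statement's English description precedes it below -/
import Mathlib

section
/- Let $A$ be a $(d+1) \times (d+1)$ symmetric matrix with rational entries, $\Delta_d = \{x \in \mathbb{R}^{d+1} : \sum_i x_i = 1, x_i \ge 0\}$, $\Delta_d^o = \{x \in \Delta_d : x_i > 0 \; \forall i\}$, and $f(x) = \frac{1}{2}x^T A x$ with $M = \max_{\Delta_d} f$. If there exists $x \in \Delta_d^o$ with $f(x) = M$, then there exists $x' \in \Delta_d^o$ with all rational coordinates and $f(x') = M$. -/
/-!
At an interior maximiser `x` of `y ↦ yᵀAy` on the simplex the first-order conditions say that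
`A x` is a constant vector. The points `y` with `∑ yᵢ = 1` and `A y` constant form the solution set
of a linear system with rational coefficients, and the quadratic form is constant on it, since
symmetry of `A` gives `yᵀAy = xᵀAy = yᵀAx = xᵀAx`. Rational solutions of a rational linear system
are dense among its real solutions, so one of them lies in the open positive orthant around `x`.
-/

open scoped Matrix

open Matrix

theorem LinearMap.exists_comp_comp_eq_self {K V W : Type*} [Field K] [AddCommGroup V]
    [Module K V] [AddCommGroup W] [Module K W] (f : V →ₗ[K] W) :
    ∃ g : W →ₗ[K] V, f ∘ₗ g ∘ₗ f = f := by
  obtain ⟨s, hs⟩ := f.rangeRestrict.exists_rightInverse_of_surjective f.range_rangeRestrict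
  obtain ⟨r, hr⟩ := f.range.subtype.exists_leftInverse_of_injective f.range.ker_subtype
  refine ⟨s ∘ₗ r, ?_⟩
  calc f ∘ₗ (s ∘ₗ r) ∘ₗ f
      = f.range.subtype ∘ₗ (f.rangeRestrict ∘ₗ s) ∘ₗ (r ∘ₗ f.range.subtype) ∘ₗ
          f.rangeRestrict := rfl
    _ = f := by rw [hs, hr]; rfl

theorem Matrix.exists_mul_mul_eq_self {K m n : Type*} [Field K] [Fintype m] [Fintype n]
    (B : Matrix m n K) : ∃ G : Matrix n m K, B * G * B = B := by
  classical
  obtain ⟨g, hg⟩ := (toLin' B).exists_comp_comp_eq_self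
  refine ⟨LinearMap.toMatrix' g, toLin'.injective ?_⟩
  simpa [Matrix.toLin'_mul, LinearMap.comp_assoc] using hg

theorem Matrix.map_ratCast_mulVec {m n : Type*} [Fintype n] (B : Matrix m n ℚ) (v : n → ℚ) :
    B.map (↑) *ᵥ (fun j => (v j : ℝ)) = fun i => ((B *ᵥ v) i : ℝ) :=
  funext fun i => ((Rat.castHom ℝ).map_mulVec B v i).symm

theorem Matrix.map_ratCast_mul {l m n : Type*} [Fintype m] (B : Matrix l m ℚ)
    (C : Matrix m n ℚ) :
    (B * C).map ((↑) : ℚ → ℝ) = B.map ((↑) : ℚ → ℝ) * C.map ((↑) : ℚ → ℝ) :=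
  Matrix.map_mul (f := Rat.castHom ℝ)

theorem Matrix.mem_closure_ratCast_solutions {m n : Type*} [Fintype m] [Fintype n]
    (B : Matrix m n ℚ) (b : m → ℚ) {x : n → ℝ} (hx : B.map (↑) *ᵥ x = fun i => (b i : ℝ)) :
    x ∈ closure ((fun y j => (y j : ℝ)) '' {y : n → ℚ | B *ᵥ y = b}) := by
  obtain ⟨G, hG⟩ := B.exists_mul_mul_eq_self
  have hBGb : B *ᵥ G *ᵥ b = b := by
    have hcast : (fun i => ((B *ᵥ G *ᵥ b) i : ℝ)) = fun i => (b i : ℝ) :=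
      calc (fun i => ((B *ᵥ G *ᵥ b) i : ℝ))
          = B.map (↑) *ᵥ G.map (↑) *ᵥ (fun i => (b i : ℝ)) := by
            rw [map_ratCast_mulVec, map_ratCast_mulVec]
        _ = (B * G * B).map (↑) *ᵥ x := by
            simp only [← hx, map_ratCast_mul, mulVec_mulVec, Matrix.mul_assoc]
        _ = fun i => (b i : ℝ) := by rw [hG, hx]
    exact funext fun i => Rat.cast_injective (congrFun hcast i)
  -- As `B * G * B = B`, `φ` is a continuous retraction of `ℝⁿ` onto the real solutions, and it
  -- sends rational vectors to rational solutions.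
  let φ : (n → ℝ) → (n → ℝ) :=
    fun z => G.map (↑) *ᵥ (fun i => (b i : ℝ)) + (z - G.map (↑) *ᵥ B.map (↑) *ᵥ z)
  have hφx : φ x = x := by simp only [φ, hx, add_sub_cancel]
  have hdense : DenseRange fun (y : n → ℚ) j => (y j : ℝ) :=
    DenseRange.piMap fun _ => Rat.denseRange_cast
  rw [← hφx]
  refine map_mem_closure (by fun_prop) (hdense x) ?_
  rintro _ ⟨z, rfl⟩
  refine ⟨G *ᵥ b + (z - G *ᵥ B *ᵥ z), ?_, ?_⟩
  · simp [mulVec_add, mulVec_sub, mulVec_mulVec, ← Matrix.mul_assoc, hG, hBGb]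
  · ext j
    simp [φ, map_ratCast_mulVec, -mulVec_mulVec]

theorem isOpen_setOf_forall_pos {ι : Type*} [Finite ι] :
    IsOpen {z : ι → ℝ | ∀ i, 0 < z i} := by
  simpa only [Set.ofPred_forall] using
    isOpen_iInter_of_finite fun i => isOpen_lt continuous_const (continuous_apply i)

theorem Matrix.IsSymm.dotProduct_mulVec_comm {ι R : Type*} [Fintype ι] [CommSemiring R]
    {A : Matrix ι ι R} (hA : A.IsSymm) (v w : ι → R) : v ⬝ᵥ A *ᵥ w = w ⬝ᵥ A *ᵥ v := by
  rw [dotProduct_mulVec, ← mulVec_transpose, hA.eq, dotProduct_comm]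

theorem Matrix.IsSymm.dotProduct_mulVec_add_smul {ι R : Type*} [Fintype ι] [CommRing R]
    {A : Matrix ι ι R} (hA : A.IsSymm) (x v : ι → R) (t : R) :
    (x + t • v) ⬝ᵥ A *ᵥ (x + t • v) =
      x ⬝ᵥ A *ᵥ x + 2 * t * (v ⬝ᵥ A *ᵥ x) + t ^ 2 * (v ⬝ᵥ A *ᵥ v) := by
  simp only [mulVec_add, mulVec_smul, add_dotProduct, dotProduct_add, smul_dotProduct,
    dotProduct_smul, smul_eq_mul, hA.dotProduct_mulVec_comm x v]
  ring

theorem dotProduct_eq_of_sum_eq_one {ι R : Type*} [Fintype ι] [NonAssocSemiring R]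
    {y w : ι → R} {c : R} (hy : ∑ i, y i = 1) (hw : ∀ i, w i = c) : y ⬝ᵥ w = c := by
  simp [dotProduct, hw, ← Finset.sum_mul, hy]

theorem Matrix.IsSymm.dotProduct_mulVec_self_eq {ι R : Type*} [Fintype ι] [CommRing R]
    {A : Matrix ι ι R} (hA : A.IsSymm) {x y : ι → R} {a b : R} (hx : ∑ i, x i = 1)
    (hy : ∑ i, y i = 1) (hAx : ∀ i, (A *ᵥ x) i = a) (hAy : ∀ i, (A *ᵥ y) i = b) :
    y ⬝ᵥ A *ᵥ y = x ⬝ᵥ A *ᵥ x := by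
  have hba : b = a := by
    rw [← dotProduct_eq_of_sum_eq_one hx hAy, ← dotProduct_eq_of_sum_eq_one hy hAx,
      hA.dotProduct_mulVec_comm]
  rw [dotProduct_eq_of_sum_eq_one hy hAy, dotProduct_eq_of_sum_eq_one hx hAx, hba]

section Simplex

variable {ι : Type*} [Fintype ι] {A : Matrix ι ι ℝ} {x : ι → ℝ}

theorem IsMaxOn.dotProduct_mulVec_eq_zero (hA : A.IsSymm)
    (hmax : IsMaxOn (fun y => y ⬝ᵥ A *ᵥ y) (stdSimplex ℝ ι) x) (hsum : ∑ i, x i = 1)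
    (hpos : ∀ i, 0 < x i) {v : ι → ℝ} (hv : ∑ i, v i = 0) : v ⬝ᵥ A *ᵥ x = 0 := by
  let q : ℝ → ℝ := fun t => (x + t • v) ⬝ᵥ A *ᵥ (x + t • v)
  have hq : HasDerivAt q (2 * (v ⬝ᵥ A *ᵥ x)) 0 := by
    rw [show q = _ from funext (hA.dotProduct_mulVec_add_smul x v)]
    simpa using ((((hasDerivAt_id (0 : ℝ)).const_mul 2).mul_const (v ⬝ᵥ A *ᵥ x)).const_add
      (x ⬝ᵥ A *ᵥ x)).fun_add ((hasDerivAt_pow 2 (0 : ℝ)).mul_const (v ⬝ᵥ A *ᵥ v))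
  have hloc : IsLocalMax q 0 := by
    have hline : Continuous fun t : ℝ => x + t • v := by fun_prop
    filter_upwards [hline.continuousAt.preimage_mem_nhds
      (isOpen_setOf_forall_pos.mem_nhds (by simpa using hpos))] with t ht
    have hsum_t : ∑ i, (x + t • v) i = 1 := by
      simp [Finset.sum_add_distrib, ← Finset.mul_sum, hsum, hv]
    simpa [q] using hmax ⟨fun i => (ht i).le, hsum_t⟩
  simpa using hloc.hasDerivAt_eq_zero hq

theorem IsMaxOn.mulVec_apply_eq (hA : A.IsSymm)
    (hmax : IsMaxOn (fun y => y ⬝ᵥ A *ᵥ y) (stdSimplex ℝ ι) x) (hsum : ∑ i, x i = 1)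
    (hpos : ∀ i, 0 < x i) (i j : ι) : (A *ᵥ x) i = (A *ᵥ x) j := by
  classical
  have := hmax.dotProduct_mulVec_eq_zero hA hsum hpos
    (v := Pi.single i 1 - Pi.single j 1) (by simp [Finset.sum_sub_distrib])
  simpa [sub_dotProduct, sub_eq_zero] using this

end Simplex

section StationarySystem

variable {ι R : Type*}

def simplexStationaryMatrix [Ring R] (A : Matrix ι ι R) (i₀ : ι) : Matrix ι ι R :=
  of fun i j => A i j - A i₀ j + 1

theorem map_simplexStationaryMatrix {S : Type*} [Ring R] [Ring S] (f : R →+* S)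
    (A : Matrix ι ι R) (i₀ : ι) :
    (simplexStationaryMatrix A i₀).map f = simplexStationaryMatrix (A.map f) i₀ := by
  ext i j
  simp [simplexStationaryMatrix]

theorem simplexStationaryMatrix_mulVec_eq_one_iff [Fintype ι] [CommRing R]
    (A : Matrix ι ι R) (i₀ : ι) (y : ι → R) :
    simplexStationaryMatrix A i₀ *ᵥ y = 1 ↔
      ∑ i, y i = 1 ∧ ∀ i, (A *ᵥ y) i = (A *ᵥ y) i₀ := by
  have h : ∀ i, (simplexStationaryMatrix A i₀ *ᵥ y) i =
      (A *ᵥ y) i - (A *ᵥ y) i₀ + ∑ j, y j := by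
    intro i
    simp [simplexStationaryMatrix, mulVec, dotProduct, add_mul, sub_mul,
      Finset.sum_add_distrib, Finset.sum_sub_distrib]
  simp only [funext_iff, Pi.one_apply, h]
  refine ⟨fun H => ?_, fun ⟨hsum, hgrad⟩ i => by rw [hgrad i, sub_self, zero_add, hsum]⟩
  have hsum : ∑ j, y j = 1 := by simpa using H i₀
  exact ⟨hsum, fun i => sub_eq_zero.1 (by simpa [hsum] using H i)⟩

end StationarySystem

theorem stmt8 (d : ℕ) (A : Matrix (Fin (d + 1)) (Fin (d + 1)) ℝ)
    (hsymm : A.IsSymm) (hrat : ∀ i j, ∃ q : ℚ, A i j = q)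
    (x : Fin (d + 1) → ℝ) (hx1 : ∑ i, x i = 1) (hx2 : ∀ i, 0 < x i)
    (hmax : ∀ y : Fin (d + 1) → ℝ, (∑ i, y i = 1) → (∀ i, 0 ≤ y i) →
      1 / 2 * (y ⬝ᵥ A.mulVec y) ≤ 1 / 2 * (x ⬝ᵥ A.mulVec x)) :
    ∃ x' : Fin (d + 1) → ℝ,
      (∑ i, x' i = 1) ∧ (∀ i, 0 < x' i) ∧ (∀ i, ∃ q : ℚ, x' i = q) ∧
      1 / 2 * (x' ⬝ᵥ A.mulVec x') = 1 / 2 * (x ⬝ᵥ A.mulVec x) := by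
  obtain ⟨Aq, rfl⟩ : ∃ Aq : Matrix (Fin (d + 1)) (Fin (d + 1)) ℚ, Aq.map (↑) = A :=
    ⟨of fun i j => (hrat i j).choose, by ext i j; exact (hrat i j).choose_spec.symm⟩
  have hmax' : IsMaxOn (fun y => y ⬝ᵥ Aq.map (↑) *ᵥ y) (stdSimplex ℝ _) x :=
    fun y hy => by simpa using hmax y hy.2 hy.1
  have hgrad := fun i => hmax'.mulVec_apply_eq hsymm hx1 hx2 i 0
  have hmapS : (simplexStationaryMatrix Aq 0).map (↑) =
      simplexStationaryMatrix (Aq.map (↑) : Matrix _ _ ℝ) 0 := by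
    simpa using map_simplexStationaryMatrix (Rat.castHom ℝ) Aq 0
  have hxS : simplexStationaryMatrix (Aq.map (↑)) 0 *ᵥ x = 1 :=
    (simplexStationaryMatrix_mulVec_eq_one_iff _ _ _).2 ⟨hx1, hgrad⟩
  obtain ⟨_, hpos, y, hyS, rfl⟩ := mem_closure_iff.1
    (mem_closure_ratCast_solutions (simplexStationaryMatrix Aq 0) 1
      (by rw [hmapS, hxS]; ext; simp)) _ isOpen_setOf_forall_pos hx2
  have hyS' : simplexStationaryMatrix (Aq.map (↑)) 0 *ᵥ (fun j => (y j : ℝ)) = 1 := by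
    rw [← hmapS, map_ratCast_mulVec, hyS.out]
    ext; simp
  obtain ⟨hysum, hygrad⟩ := (simplexStationaryMatrix_mulVec_eq_one_iff _ _ _).1 hyS'
  refine ⟨_, hysum, hpos, fun i => ⟨y i, rfl⟩, ?_⟩
  rw [hsymm.dotProduct_mulVec_self_eq hx1 hysum hgrad hygrad]
end

section
/- Let $x_1, \dots, x_N \in S^d$ maximize the number of perpendicular pairs $\#\{(i,j) : i < j, \; x_i \cdot x_j = 0\}$ among all $N$-point configurations on $S^d$. Then there exists an orthonormal basis $v_1, \dots, v_{d+1}$ of $\mathbb{R}^{d+1}$ such that after reordering, $x_i \in \{v_j, -v_j\}$ whenever $i \equiv j \pmod{d+1}$. -/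
open scoped RealInnerProductSpace

/-- Number of perpendicular pairs in a configuration of `N` points on the sphere. -/
noncomputable def perpPairs {d N : ℕ} (x : Fin N → EuclideanSpace ℝ (Fin (d + 1))) : ℕ :=
  Set.ncard {p : Fin N × Fin N | p.1 < p.2 ∧ ⟪x p.1, x p.2⟫ = 0}

/-!
The perpendicularity graph of unit vectors in `ℝ^(d+1)` has no `(d+2)`-clique, since pairwise
orthogonal unit vectors are linearly independent. The cyclic basis configuration realises the
Turán graph `T(N, d+1)`, so a maximizer's graph is Turán-maximal and, by the uniqueness part of
Turán's theorem, isomorphic to `T(N, d+1)`. After relabelling, points in different residue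
classes mod `d+1` are orthogonal; one representative per class extends to an orthonormal basis,
and each remaining point, orthogonal to all basis vectors but one, is that vector up to sign.
-/

open Finset Module

namespace SimpleGraph

lemma ncard_setOf_lt_adj {V : Type*} [LinearOrder V] (G : SimpleGraph V) :
    {p : V × V | p.1 < p.2 ∧ G.Adj p.1 p.2}.ncard = G.edgeSet.ncard := by
  have himage :
      (fun p : V × V ↦ s(p.1, p.2)) '' {p | p.1 < p.2 ∧ G.Adj p.1 p.2} = G.edgeSet := by
    ext e
    induction e using Sym2.ind with
    | _ a b =>
      simp only [Set.mem_image, Set.mem_ofPred_eq, Prod.exists, mem_edgeSet, Sym2.eq_iff]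
      constructor
      · rintro ⟨a', b', ⟨-, hadj⟩, ⟨rfl, rfl⟩ | ⟨rfl, rfl⟩⟩
        exacts [hadj, hadj.symm]
      · intro hadj
        rcases lt_or_gt_of_ne hadj.ne with hab | hba
        · exact ⟨a, b, ⟨hab, hadj⟩, .inl ⟨rfl, rfl⟩⟩
        · exact ⟨b, a, ⟨hba, hadj.symm⟩, .inr ⟨rfl, rfl⟩⟩
  rw [← himage, Set.InjOn.ncard_image]
  rintro ⟨a, b⟩ ⟨hab, -⟩ ⟨a', b'⟩ ⟨hab', -⟩ h
  rcases Sym2.eq_iff.1 h with ⟨rfl, rfl⟩ | ⟨rfl, rfl⟩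
  · rfl
  · exact absurd (hab.trans hab') (lt_irrefl _)

end SimpleGraph

section InnerProductSpace

variable {E : Type*} [NormedAddCommGroup E] [InnerProductSpace ℝ E]

def orthogonalityGraph {ι : Type*} (x : ι → E) : SimpleGraph ι where
  Adj i j := i ≠ j ∧ ⟪x i, x j⟫ = 0
  symm := ⟨fun _ _ h ↦ ⟨h.1.symm, by rw [real_inner_comm, h.2]⟩⟩
  loopless := ⟨fun _ h ↦ h.1 rfl⟩

@[simp]
lemma orthogonalityGraph_adj {ι : Type*} {x : ι → E} {i j : ι} :
    (orthogonalityGraph x).Adj i j ↔ i ≠ j ∧ ⟪x i, x j⟫ = 0 :=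
  Iff.rfl

lemma cliqueFree_orthogonalityGraph [FiniteDimensional ℝ E] {ι : Type*} {x : ι → E}
    (hx : ∀ i, x i ≠ 0) : (orthogonalityGraph x).CliqueFree (finrank ℝ E + 1) := by
  intro t ht
  have hli : LinearIndependent ℝ (fun i : t ↦ x i) :=
    linearIndependent_of_ne_zero_of_inner_eq_zero (fun i ↦ hx i)
      fun i j hij ↦ (orthogonalityGraph_adj.1 (ht.1 i.2 j.2 (Subtype.coe_ne_coe.2 hij))).2
  have := hli.fintype_card_le_finrank
  rw [Fintype.card_coe, ht.2] at this
  omega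

lemma OrthonormalBasis.eq_or_eq_neg_of_inner_eq_zero {ι : Type*} [Fintype ι]
    (b : OrthonormalBasis ι ℝ E) {u : E} (hu : ‖u‖ = 1) {j : ι}
    (h : ∀ j', j' ≠ j → ⟪b j', u⟫ = 0) : u = b j ∨ u = -b j := by
  have hrep : u = ⟪b j, u⟫ • b j := by
    conv_lhs => rw [← b.sum_repr' u]
    exact Finset.sum_eq_single_of_mem j (mem_univ j) fun j' _ hj' ↦ by rw [h j' hj', zero_smul]
  have hcoeff : |⟪b j, u⟫| = 1 := by
    simpa [hu, norm_smul, b.orthonormal.1 j] using (congrArg norm hrep).symm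
  rcases abs_eq zero_le_one |>.1 hcoeff with h1 | h1
  · exact .inl (by rw [hrep, h1, one_smul])
  · exact .inr (by rw [hrep, h1, neg_one_smul])

lemma exists_orthonormalBasis_of_inner_eq_zero_of_mod_ne [FiniteDimensional ℝ E]
    {k N : ℕ} (hk : finrank ℝ E = k) {x : Fin N → E} (hx : ∀ i, ‖x i‖ = 1)
    (hperp : ∀ a b : Fin N, (a : ℕ) % k ≠ b % k → ⟪x a, x b⟫ = 0) :
    ∃ b : OrthonormalBasis (Fin k) ℝ E, ∀ (i : Fin N) (j : Fin k), (i : ℕ) % k = j →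
      x i = b j ∨ x i = -b j := by
  classical
  set rep : Fin k → E := fun j ↦ if h : (j : ℕ) < N then x ⟨j, h⟩ else 0
  set s : Set (Fin k) := {j | (j : ℕ) < N}
  have rep_of_mem : ∀ j (h : j ∈ s), rep j = x ⟨j, h⟩ := fun j h ↦ dif_pos h
  have hrep : Orthonormal ℝ (s.domRestrict rep) := by
    rw [orthonormal_iff_ite]
    rintro ⟨a, ha⟩ ⟨b, hb⟩
    simp only [Set.domRestrict_apply, rep_of_mem a ha, rep_of_mem b hb, Subtype.mk.injEq]
    split_ifs with hab
    · subst hab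
      rw [real_inner_self_eq_norm_sq, hx, one_pow]
    · exact hperp ⟨a, ha⟩ ⟨b, hb⟩
        (by simpa [Nat.mod_eq_of_lt a.isLt, Nat.mod_eq_of_lt b.isLt, Fin.val_inj])
  obtain ⟨b, hb⟩ := hrep.exists_orthonormalBasis_extension_of_card_eq (by simp [hk])
  refine ⟨b, fun i j hij ↦ ?_⟩
  by_cases hi : (i : ℕ) < k
  · have hj : (j : ℕ) = i := by rw [← hij, Nat.mod_eq_of_lt hi]
    have hjs : j ∈ s := show (j : ℕ) < N by omega
    exact .inl (by rw [hb j hjs, rep_of_mem j hjs]; exact congrArg x (Fin.ext hj.symm))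
  · -- every residue class is represented, so `b` consists of points of `x`
    have hs : ∀ j' : Fin k, j' ∈ s := fun j' ↦ show (j' : ℕ) < N by omega
    refine b.eq_or_eq_neg_of_inner_eq_zero (hx i) fun j' hj' ↦ ?_
    rw [hb j' (hs j'), rep_of_mem j' (hs j')]
    exact hperp ⟨j', hs j'⟩ i (by simpa [Nat.mod_eq_of_lt j'.isLt, hij, Fin.val_inj])

end InnerProductSpace

lemma perpPairs_eq_ncard_edgeSet {d N : ℕ} (x : Fin N → EuclideanSpace ℝ (Fin (d + 1))) :
    perpPairs x = (orthogonalityGraph x).edgeSet.ncard := by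
  rw [← SimpleGraph.ncard_setOf_lt_adj, perpPairs]
  congr 1
  ext p
  simp only [Set.mem_ofPred_eq, orthogonalityGraph_adj]
  exact ⟨fun h ↦ ⟨h.1, h.1.ne, h.2⟩, fun h ↦ ⟨h.1, h.2.2⟩⟩

noncomputable def cyclicBasisConfig (d N : ℕ) : Fin N → EuclideanSpace ℝ (Fin (d + 1)) :=
  fun i ↦ EuclideanSpace.single ⟨i % (d + 1), Nat.mod_lt _ d.succ_pos⟩ 1

lemma norm_cyclicBasisConfig (d N : ℕ) (i : Fin N) : ‖cyclicBasisConfig d N i‖ = 1 := by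
  simp [cyclicBasisConfig]

lemma orthogonalityGraph_cyclicBasisConfig (d N : ℕ) :
    orthogonalityGraph (cyclicBasisConfig d N) = SimpleGraph.turanGraph N (d + 1) := by
  ext i j
  simp only [orthogonalityGraph_adj, cyclicBasisConfig, EuclideanSpace.inner_single_left,
    PiLp.single_apply, SimpleGraph.turanGraph_adj, Fin.mk.injEq, map_one, one_mul]
  constructor
  · rintro ⟨-, h⟩ heq
    simp [heq] at h
  · intro h
    exact ⟨fun hij ↦ h (by rw [hij]), by simpa using h⟩

lemma isTuranMaximal_orthogonalityGraph {d N : ℕ} {x : Fin N → EuclideanSpace ℝ (Fin (d + 1))}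
    [DecidableRel (orthogonalityGraph x).Adj] (hx : ∀ i, ‖x i‖ = 1)
    (hmax : ∀ y : Fin N → EuclideanSpace ℝ (Fin (d + 1)), (∀ i, ‖y i‖ = 1) →
      perpPairs y ≤ perpPairs x) :
    (orthogonalityGraph x).IsTuranMaximal (d + 1) := by
  have hcf := cliqueFree_orthogonalityGraph (x := x) fun i ↦ norm_ne_zero_iff.1 (by simp [hx i])
  rw [finrank_euclideanSpace_fin] at hcf
  refine ⟨hcf, fun H _ hH ↦ ?_⟩
  calc #H.edgeFinset ≤ #(SimpleGraph.turanGraph N (d + 1)).edgeFinset :=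
        (SimpleGraph.isTuranMaximal_turanGraph d.succ_pos).2 hH
    _ = perpPairs (cyclicBasisConfig d N) := by
        rw [perpPairs_eq_ncard_edgeSet, orthogonalityGraph_cyclicBasisConfig,
          ← SimpleGraph.coe_edgeFinset, Set.ncard_coe_finset]
    _ ≤ perpPairs x := hmax _ (norm_cyclicBasisConfig d N)
    _ = #(orthogonalityGraph x).edgeFinset := by
        rw [perpPairs_eq_ncard_edgeSet, ← SimpleGraph.coe_edgeFinset, Set.ncard_coe_finset]

theorem stmt14 (d N : ℕ) (x : Fin N → EuclideanSpace ℝ (Fin (d + 1)))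
    (hx : ∀ i, ‖x i‖ = 1)
    (hmax : ∀ y : Fin N → EuclideanSpace ℝ (Fin (d + 1)), (∀ i, ‖y i‖ = 1) →
      perpPairs y ≤ perpPairs x) :
    ∃ (v : Fin (d + 1) → EuclideanSpace ℝ (Fin (d + 1))) (σ : Equiv.Perm (Fin N)),
      Orthonormal ℝ v ∧
      ∀ (i : Fin N) (j : Fin (d + 1)), (i : ℕ) % (d + 1) = (j : ℕ) →
        x (σ i) = v j ∨ x (σ i) = -v j := by
  classical
  obtain ⟨φ⟩ := (isTuranMaximal_orthogonalityGraph hx hmax).nonempty_iso_turanGraph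
  rw [Fintype.card_fin] at φ
  have hperp : ∀ a b : Fin N, (a : ℕ) % (d + 1) ≠ b % (d + 1) →
      ⟪x (φ.symm a), x (φ.symm b)⟫ = 0 :=
    fun a b hab ↦ (orthogonalityGraph_adj.1 (φ.symm.map_adj_iff.2 hab)).2
  obtain ⟨b, hb⟩ := exists_orthonormalBasis_of_inner_eq_zero_of_mod_ne
    (finrank_euclideanSpace_fin (𝕜 := ℝ)) (fun i ↦ hx _) hperp
  exact ⟨b, φ.symm.toEquiv, b.orthonormal, hb⟩
end
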